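/- Let G be the time-invariant dynamic Bayesian network DAG of the environment and suppose the joint distribution of the variables satisfies the global Markov condition and faithfulness with respect to G. Then for all indices i, j ∈ {1,…,d}, the entry c^{g→g}_{i,j} = 1 if and only if g_{i,t} is NOT conditionally independent of g_{j,t-1} given the remaining previous-slice latent components g_{\{1,…,d\}∖\{j\}, t-1} and the action a_{t-1}. -/
import Mathlib


open Relation

/-- Nodes of the time-invariant dynamic Bayesian network: latent state
components `g_{i,t}`, actions `a_t`, and rewards `r_t`. -/
inductive DBNNode (d : ℕ) : Type where
  | latent (i : Fin d) (t : ℕ)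
  | action (t : ℕ)
  | reward (t : ℕ)
deriving DecidableEq

/-- The fixed binary structural masks of the DBN.  `cgg i j = true` encodes the
edge `g_{j,t-1} → g_{i,t}`, `cag i` the edge `a_{t-1} → g_{i,t}`, `cgr i` the
edge `g_{i,t-1} → r_t`, and `car` the edge `a_{t-1} → r_t`. -/
structure DBNMasks (d : ℕ) where
  cgg : Fin d → Fin d → Bool
  cag : Fin d → Bool
  cgr : Fin d → Bool
  car : Bool

/-- The directed edges of the time-invariant DBN graph `G`. -/
def DBNEdge {d : ℕ} (c : DBNMasks d) : DBNNode d → DBNNode d → Prop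
  | .latent j t, .latent i t' => t' = t + 1 ∧ c.cgg i j = true
  | .action t, .latent i t' => t' = t + 1 ∧ c.cag i = true
  | .latent i t, .reward t' => t' = t + 1 ∧ c.cgr i = true
  | .action t, .reward t' => t' = t + 1 ∧ c.car = true
  | _, _ => False

/-- Undirected adjacency induced by a directed edge relation. -/
def Adj {V : Type*} (E : V → V → Prop) (x y : V) : Prop := E x y ∨ E y x

/-- `p` is a (simple, undirected) path in the graph with edge relation `E`:
consecutive nodes are adjacent and no node repeats. -/
def IsPathList {V : Type*} (E : V → V → Prop) (p : List V) : Prop :=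
  p.Chain' (Adj E) ∧ p.Nodup

/-- A path `p` is blocked by the conditioning set `Z`: it contains a
chain `u → m → v` (in either direction) or a fork `u ← m → v` with middle
node `m ∈ Z`, or a collider `u → m ← v` with `m ∉ Z` and no descendant of
`m` in `Z`. -/
def BlockedBy {V : Type*} (E : V → V → Prop) (Z : Set V) (p : List V) : Prop :=
  ∃ u m v : V, [u, m, v] <:+: p ∧
    ((((E u m ∧ E m v) ∨ (E v m ∧ E m u) ∨ (E m u ∧ E m v)) ∧ m ∈ Z) ∨
      ((E u m ∧ E v m) ∧ m ∉ Z ∧ ∀ w : V, Relation.TransGen E m w → w ∉ Z))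

/-- `Z` d-separates `X` from `Y` in the graph with edge relation `E`: every
path between a node of `X` and a node of `Y` is blocked by `Z`. -/
def DSep {V : Type*} (E : V → V → Prop) (X Y Z : Set V) : Prop :=
  ∀ x ∈ X, ∀ y ∈ Y, ∀ p : List V,
    IsPathList E p → p.head? = some x → p.getLast? = some y → BlockedBy E Z p

/-- The joint distribution (represented abstractly by its ternary conditional
independence relation `CI X Y Z`, "X ⫫ Y given Z") satisfies the global Markov
condition w.r.t. the graph: d-separation implies conditional independence. -/
def GlobalMarkov {V : Type*} (E : V → V → Prop)
    (CI : Set V → Set V → Set V → Prop) : Prop :=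
  ∀ X Y Z : Set V, Disjoint X Y → Disjoint X Z → Disjoint Y Z →
    DSep E X Y Z → CI X Y Z

/-- The joint distribution is faithful to the graph: every conditional
independence corresponds to a d-separation. -/
def FaithfulTo {V : Type*} (E : V → V → Prop)
    (CI : Set V → Set V → Set V → Prop) : Prop :=
  ∀ X Y Z : Set V, Disjoint X Y → Disjoint X Z → Disjoint Y Z →
    CI X Y Z → DSep E X Y Z

/-- `g_{i,t} ∈ g_t^min` iff `c_i^{g→r} = 1` or `g_{i,t}` has a directed path in
`G` to a future reward `r_{t+k}` (some `k > 0`) passing through other latent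
state components. -/
def InMinSet {d : ℕ} (c : DBNMasks d) (i : Fin d) (t : ℕ) : Prop :=
  c.cgr i = true ∨
    ∃ k : ℕ, 0 < k ∧ ∃ (j : Fin d) (s : ℕ),
      Relation.TransGen (DBNEdge c) (DBNNode.latent i t) (DBNNode.latent j s) ∧
      Relation.TransGen (DBNEdge c) (DBNNode.latent j s) (DBNNode.reward (t + k))

/-- The minimal latent state set `g_t^min`, as a set of nodes of `G`. -/
def MinSet {d : ℕ} (c : DBNMasks d) (t : ℕ) : Set (DBNNode d) :=
  {n | ∃ i : Fin d, n = DBNNode.latent i t ∧ InMinSet c i t}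

/-- Time coordinate of a DBN node. -/
def DBNNode.time {d : ℕ} : DBNNode d → ℕ
  | .latent _ t => t
  | .action t => t
  | .reward t => t

lemma dbn_edge_time {d : ℕ} {c : DBNMasks d} {a b : DBNNode d}
    (h : DBNEdge c a b) : b.time = a.time + 1 := by
  cases a <;> cases b <;> first | exact h.elim | exact h.1

lemma dbn_transGen_time {d : ℕ} {c : DBNMasks d} {a b : DBNNode d}
    (h : Relation.TransGen (DBNEdge c) a b) : a.time < b.time := by
  induction h with
  | single h => have := dbn_edge_time h; omega
  | tail _ h ih => have := dbn_edge_time h; omega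

/-- If a chain-path starts with a forward edge but ends strictly below the
second node's level, it contains a collider no lower than the second node. -/
lemma collider_exists {V : Type*} (E : V → V → Prop) (f : V → ℕ)
    (hE : ∀ a b : V, E a b → f b = f a + 1) :
    ∀ (l : List V) (a b : V), (a :: b :: l).Chain' (Adj E) → E a b →
      ∀ y : V, (a :: b :: l).getLast? = some y → f y < f b →
      ∃ u m v : V, [u, m, v] <:+: (a :: b :: l) ∧ E u m ∧ E v m ∧ f b ≤ f m := by
  intro l
  induction l with
  | nil =>
      intro a b _ _ y hy hlt
      simp at hy
      subst hy; omega
  | cons c l' IH =>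
      intro a b hchain hab y hy hlt
      have hbc : Adj E b c := (List.isChain_cons_cons.mp (List.isChain_cons_cons.mp hchain).2).1
      rcases hbc with hbc | hcb
      · -- forward again: recurse on the tail
        have htail : (b :: c :: l').Chain' (Adj E) := (List.isChain_cons_cons.mp hchain).2
        have hy' : (b :: c :: l').getLast? = some y := by simpa using hy
        have hfc : f c = f b + 1 := hE _ _ hbc
        obtain ⟨u, m, v, hinf, hum, hvm, hle⟩ :=
          IH b c htail hbc y hy' (by omega)
        exact ⟨u, m, v, hinf.trans ((List.suffix_cons a _).isInfix), hum, hvm, by omega⟩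
      · -- collider at b
        exact ⟨a, b, c, ⟨[], l', rfl⟩, hab, hcb, le_rfl⟩

/-- Under the global Markov condition and faithfulness, `c^{g→g}_{i,j} = 1` iff
`g_{i,t}` is conditionally dependent on `g_{j,t-1}` given the remaining
previous-slice latent components and the action `a_{t-1}`. -/
theorem cgg_identification (d : ℕ) (c : DBNMasks d)
    (CI : Set (DBNNode d) → Set (DBNNode d) → Set (DBNNode d) → Prop)
    (hMarkov : GlobalMarkov (DBNEdge c) CI)
    (hFaithful : FaithfulTo (DBNEdge c) CI) (i j : Fin d) (t : ℕ) :
    c.cgg i j = true ↔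
      ¬ CI {DBNNode.latent i (t + 1)} {DBNNode.latent j t}
        ({n : DBNNode d | ∃ j' : Fin d, j' ≠ j ∧ n = DBNNode.latent j' t} ∪
          {DBNNode.action t}) := by
  set x : DBNNode d := DBNNode.latent i (t + 1) with hx
  set y : DBNNode d := DBNNode.latent j t with hy
  set Z : Set (DBNNode d) :=
    ({n : DBNNode d | ∃ j' : Fin d, j' ≠ j ∧ n = DBNNode.latent j' t} ∪
      {DBNNode.action t}) with hZ
  have hxy : x ≠ y := by
    intro h; rw [hx, hy] at h; injection h with h1 h2; omega
  have hZtime : ∀ n ∈ Z, DBNNode.time n = t := by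
    rintro n (⟨j', _, rfl⟩ | rfl) <;> rfl
  have hxZ : x ∉ Z := by
    intro h
    have := hZtime x h
    have h2 : DBNNode.time x = t + 1 := rfl
    omega
  have hyZ : y ∉ Z := by
    rintro (⟨j', hj', h⟩ | h)
    · rw [hy] at h; injection h with h1 h2; exact hj' h1.symm
    · rw [hy] at h; cases h
  have hXY : Disjoint ({x} : Set (DBNNode d)) {y} :=
    Set.disjoint_singleton_left.mpr hxy
  have hXZ : Disjoint ({x} : Set (DBNNode d)) Z :=
    Set.disjoint_singleton_left.mpr hxZ
  have hYZ : Disjoint ({y} : Set (DBNNode d)) Z :=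
    Set.disjoint_singleton_left.mpr hyZ
  constructor
  · intro hc hCI
    have hD := hFaithful _ _ _ hXY hXZ hYZ hCI
    have hB := hD x rfl y rfl [x, y]
      ⟨List.isChain_cons_cons.mpr ⟨Or.inr ⟨rfl, hc⟩, List.isChain_singleton y⟩,
        by simp [hxy]⟩ rfl rfl
    obtain ⟨u, m, v, hinf, _⟩ := hB
    have := hinf.length_le
    simp at this
  · intro hnCI
    by_contra hc
    apply hnCI
    apply hMarkov _ _ _ hXY hXZ hYZ
    intro x' hx' y' hy' p hp hhead hlast
    rw [Set.mem_singleton_iff] at hx' hy'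
    subst hx'; subst hy'
    obtain ⟨a, tl, rfl⟩ : ∃ a tl, p = a :: tl := by
      cases p with
      | nil => simp at hhead
      | cons a tl => exact ⟨a, tl, rfl⟩
    have ha : a = x := by simpa using hhead
    subst ha
    cases tl with
    | nil =>
        have : x = y := by simpa using hlast
        exact absurd this hxy
    | cons m rest =>
        have hadj : Adj (DBNEdge c) x m := (List.isChain_cons_cons.mp hp.1).1
        rcases hadj with hxm | hmx
        · -- first step forward in time: collider argument
          have hxm' := dbn_edge_time hxm
          have hxt : DBNNode.time x = t + 1 := rfl
          have hyt : DBNNode.time y = t := rfl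
          obtain ⟨u, m', v, hinf, hum, hvm, hle⟩ :=
            collider_exists (DBNEdge c) DBNNode.time
              (fun a b h => dbn_edge_time h) rest x m hp.1 hxm y hlast (by omega)
          refine ⟨u, m', v, hinf, Or.inr ⟨⟨hum, hvm⟩, ?_, ?_⟩⟩
          · intro hmem
            have := hZtime _ hmem
            omega
          · intro w hw hwZ
            have h1 := dbn_transGen_time hw
            have h2 := hZtime _ hwZ
            omega
        · -- first step backward in time: middle node lies in Z
          have hmZ : m ∈ Z := by
            cases m with
            | latent j' s =>
                obtain ⟨hs, hjj⟩ := hmx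
                refine Or.inl ⟨j', ?_, ?_⟩
                · intro h; subst h; exact hc hjj
                · have hst : s = t := by omega
                  rw [hst]
            | action s =>
                obtain ⟨hs, _⟩ := hmx
                have hst : s = t := by omega
                exact Or.inr (by rw [hst]; rfl)
            | reward s => exact hmx.elim
          cases rest with
          | nil =>
              have : m = y := by simpa using hlast
              exact absurd (this ▸ hmZ) hyZ
          | cons v rest' =>
              have hmv : Adj (DBNEdge c) m v :=
                (List.isChain_cons_cons.mp (List.isChain_cons_cons.mp hp.1).2).1
              refine ⟨x, m, v, ⟨[], rest', rfl⟩, Or.inl ⟨?_, hmZ⟩⟩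
              rcases hmv with hmv | hvm
              · exact Or.inr (Or.inr ⟨hmx, hmv⟩)
              · exact Or.inr (Or.inl ⟨hvm, hmx⟩)
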